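/- arXiv:1412.4046 — 2 statements merged into one kernel-verified Lean document; each statement's English description precedes it below -/
import Mathlib

section
/- Let 𝔻_r ⊂ ℂ be a disk and 𝔻_{2r} the concentric disk of doubled radius, and let f ∈ L^p(𝔻_{2r}) ∩ C^γ(𝔻_{2r}) for some 1 < p < ∞ and 0 < γ < 1. Given any θ ∈ (2/(2 + γp), 1], set s = θ(γ + 2/p) − 2/p. Then ‖f‖_{L^∞(𝔻_r)} ≤ ‖f‖_{C^s(𝔻_r)} ≤ c(θ, 𝔻_{2r}) ‖f‖_{L^p(𝔻_{2r})}^{1−θ} ‖f‖_{C^γ(𝔻_{2r})}^{θ} for a constant c depending only on θ and the disk 𝔻_{2r}. -/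
open MeasureTheory Metric Filter Topology Asymptotics

noncomputable section

/-- The Wirtinger derivative `∂_z` associated to a real-linear map `D : ℂ →L[ℝ] ℂ`. -/
def wirZ (D : ℂ →L[ℝ] ℂ) : ℂ := (D 1 - Complex.I * D Complex.I) / 2

/-- The Wirtinger derivative `∂_z̄` associated to a real-linear map `D : ℂ →L[ℝ] ℂ`. -/
def wirZbar (D : ℂ →L[ℝ] ℂ) : ℂ := (D 1 + Complex.I * D Complex.I) / 2

/-- Pointwise Wirtinger derivative `∂_z f (z)` (via the real Fréchet derivative). -/
def pderZ (f : ℂ → ℂ) (z : ℂ) : ℂ := wirZ (fderiv ℝ f z)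

/-- Pointwise Wirtinger derivative `∂_z̄ f (z)` (via the real Fréchet derivative). -/
def pderZbar (f : ℂ → ℂ) (z : ℂ) : ℂ := wirZbar (fderiv ℝ f z)

/-- `Df` is a distributional (weak) derivative of `f` on `Ω`. -/
def HasWeakDerivOn (f : ℂ → ℂ) (Df : ℂ → ℂ →L[ℝ] ℂ) (Ω : Set ℂ) : Prop :=
  LocallyIntegrableOn f Ω volume ∧ LocallyIntegrableOn (fun z => ‖Df z‖) Ω volume ∧
    ∀ ψ : ℂ → ℝ, ContDiff ℝ (⊤ : ℕ∞) ψ → HasCompactSupport ψ → tsupport ψ ⊆ Ω →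
      ∀ v : ℂ, ∫ z in Ω, (fderiv ℝ ψ z v : ℂ) * f z = - ∫ z in Ω, (ψ z : ℂ) * Df z v

/-- `f ∈ W^{1,2}_loc(Ω)`, with weak derivative `Df`. -/
def MemW12loc (f : ℂ → ℂ) (Df : ℂ → ℂ →L[ℝ] ℂ) (Ω : Set ℂ) : Prop :=
  HasWeakDerivOn f Df Ω ∧
    ∀ S : Set ℂ, IsCompact S → S ⊆ Ω → IntegrableOn (fun z => ‖Df z‖ ^ 2) S volume

/-- A structure function: (H1) for a.e. `z`, `w ↦ H z w` is `k`-Lipschitz with `0 ≤ k < 1`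
and `H z 0 = 0`; (H2) `z ↦ H z w` is measurable for each `w`. -/
def IsStructureFunction (H : ℂ → ℂ → ℂ) (k : ℝ) : Prop :=
  0 ≤ k ∧ k < 1 ∧
    (∀ᵐ z : ℂ, (∀ w₁ w₂ : ℂ, ‖H z w₁ - H z w₂‖ ≤ k * ‖w₁ - w₂‖) ∧ H z 0 = 0) ∧
    ∀ w : ℂ, Measurable fun z => H z w

/-- A homeomorphic `W^{1,2}_loc(ℂ)` solution of the nonlinear Beltrami equation
`∂_z̄ f = H (z, ∂_z f)` a.e. -/
def IsHomeoSolution (H : ℂ → ℂ → ℂ) (f : ℂ → ℂ) : Prop :=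
  IsHomeomorph f ∧ ∃ Df : ℂ → ℂ →L[ℝ] ℂ, MemW12loc f Df Set.univ ∧
    ∀ᵐ z : ℂ, wirZbar (Df z) = H z (wirZ (Df z))

/-- The uniqueness property of the nonlinear Beltrami equation attached to `H`. -/
def UniquenessProperty (H : ℂ → ℂ → ℂ) : Prop :=
  ∀ z₀ z₁ w₀ w₁ : ℂ, z₀ ≠ z₁ → w₀ ≠ w₁ →
    ∃! f : ℂ → ℂ, IsHomeoSolution H f ∧ f z₀ = w₀ ∧ f z₁ = w₁

/-- `f` is `K`-quasiregular on `Ω` with weak derivative `Df`. -/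
def IsKQuasiregularOn (K : ℝ) (f : ℂ → ℂ) (Df : ℂ → ℂ →L[ℝ] ℂ) (Ω : Set ℂ) : Prop :=
  MemW12loc f Df Ω ∧
    ∀ᵐ z ∂(volume.restrict Ω), ‖wirZbar (Df z)‖ ≤ (K - 1) / (K + 1) * ‖wirZ (Df z)‖

/-- `f` is a `K`-quasiconformal map of the plane. -/
def IsKQuasiconformal (K : ℝ) (f : ℂ → ℂ) : Prop :=
  IsHomeomorph f ∧ ∃ Df : ℂ → ℂ →L[ℝ] ℂ, IsKQuasiregularOn K f Df Set.univ

/-- A field of `K`-quasiconformal mappings: (F1) and (F2). -/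
def IsQCField (K : ℝ) (φ : ℂ → ℂ → ℂ) : Prop :=
  (∀ a : ℂ, a ≠ 0 → IsKQuasiconformal K (φ a) ∧ φ a 0 = 0 ∧ φ a 1 = a) ∧
    (∀ z : ℂ, φ 0 z = 0) ∧
    ∀ a b : ℂ, a ≠ b → IsKQuasiconformal K fun z => φ a z - φ b z

/-- `φ` is the field `𝓕_H` generated by the homeomorphic solutions of the
nonlinear Beltrami equation of `H`, normalized by `φ a 0 = 0`, `φ a 1 = a`. -/
def IsFieldOf (H : ℂ → ℂ → ℂ) (φ : ℂ → ℂ → ℂ) : Prop :=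
  (∀ z : ℂ, φ 0 z = 0) ∧
    ∀ a : ℂ, a ≠ 0 → IsHomeoSolution H (φ a) ∧ φ a 0 = 0 ∧ φ a 1 = a

/-- `f` is a `W^{1,2}_loc(ℂ)` solution of the ℝ-linear Beltrami equation with
coefficients `μ`, `ν`. -/
def IsLinBeltramiSolution (μ ν : ℂ → ℂ) (f : ℂ → ℂ) : Prop :=
  ∃ Df : ℂ → ℂ →L[ℝ] ℂ, MemW12loc f Df Set.univ ∧
    ∀ᵐ z : ℂ, wirZbar (Df z) = μ z * wirZ (Df z) + ν z * (starRingEnd ℂ) (wirZ (Df z))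

/-- Sup norm of `f` over the set `S`. -/
def supNormOn {E : Type*} [NormedAddCommGroup E] (f : ℂ → E) (S : Set ℂ) : ℝ :=
  sSup ((fun z => ‖f z‖) '' S)

/-- Hölder seminorm of exponent `s` of `f` over the set `S`. -/
def holderSeminormOn {E : Type*} [NormedAddCommGroup E] (s : ℝ) (f : ℂ → E) (S : Set ℂ) : ℝ :=
  sSup {c : ℝ | ∃ x ∈ S, ∃ y ∈ S, x ≠ y ∧ c = ‖f x - f y‖ / ‖x - y‖ ^ s}

/-- Hölder norm `‖f‖_{C^s(S)} = sup_S ‖f‖ + [f]_{C^s(S)}`. -/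
def holderNormOn {E : Type*} [NormedAddCommGroup E] (s : ℝ) (f : ℂ → E) (S : Set ℂ) : ℝ :=
  supNormOn f S + holderSeminormOn s f S

/-- `L^p` norm of `f` over the set `S`. -/
def lpNormOn {E : Type*} [NormedAddCommGroup E] (p : ℝ) (f : ℂ → E) (S : Set ℂ) : ℝ :=
  (∫ z in S, ‖f z‖ ^ p) ^ (1 / p)

/-- The determinant of a real-linear map `D : ℂ →L[ℝ] ℂ`, expressed through the
Wirtinger derivatives: `det D = |∂_z|² − |∂_z̄|²`. -/
def detW (D : ℂ →L[ℝ] ℂ) : ℝ := ‖wirZ D‖ ^ 2 - ‖wirZbar D‖ ^ 2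

/-- The z-Hölder condition (Hα): `‖H z₁ w − H z₂ w‖ ≤ H_α(Ω) ‖z₁ − z₂‖^α ‖w‖` on
every bounded `Ω`. -/
def HolderCondH (H : ℂ → ℂ → ℂ) (α : ℝ) : Prop :=
  ∀ Ω : Set ℂ, Bornology.IsBounded Ω → ∃ C : ℝ, 0 ≤ C ∧
    ∀ z₁ ∈ Ω, ∀ z₂ ∈ Ω, ∀ w : ℂ, ‖H z₁ w - H z₂ w‖ ≤ C * ‖z₁ - z₂‖ ^ α * ‖w‖

/-- A regular structure function: (H1), (H2), the uniqueness property, (Hα) and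
local α-Hölder continuity of `(z,w) ↦ D_w H (z,w)`. -/
def IsRegularSF (H : ℂ → ℂ → ℂ) (k α : ℝ) : Prop :=
  IsStructureFunction H k ∧ UniquenessProperty H ∧ 0 < α ∧ α < 1 ∧ HolderCondH H α ∧
    (∀ z : ℂ, Differentiable ℝ (H z)) ∧
    ∀ S : Set (ℂ × ℂ), IsCompact S → ∃ C : ℝ, ∀ p ∈ S, ∀ q ∈ S,
      ‖fderiv ℝ (H p.1) p.2 - fderiv ℝ (H q.1) q.2‖ ≤ C * dist p q ^ α

/-- A smooth field: each `φ_a` is `C¹` in `z`, `a ↦ D_z φ_a(z)` is differentiable, and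
`(z,a) ↦ D_a D_z φ_a(z)` is continuous on `ℂ × ℂ`. -/
def SmoothField (φ : ℂ → ℂ → ℂ) : Prop :=
  (∀ a : ℂ, ContDiff ℝ 1 (φ a)) ∧
    (∀ z a : ℂ, DifferentiableAt ℝ (fun b => fderiv ℝ (φ b) z) a) ∧
    Continuous fun p : ℂ × ℂ => fderiv ℝ (fun b => fderiv ℝ (φ b) p.1) p.2

/-- A non-degenerate field: `|∂_z φ_a(z)| ≃ |a|` on compact sets, and
`det D_a (∂_z φ_a)(z) ≠ 0` everywhere. -/
def NonDegField (φ : ℂ → ℂ → ℂ) : Prop :=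
  (∀ R : ℝ, 0 < R → ∃ c : ℝ, 1 ≤ c ∧ ∀ z ∈ ball (0 : ℂ) R, ∀ a : ℂ, a ≠ 0 →
    ‖a‖ / c ≤ ‖pderZ (φ a) z‖ ∧ ‖pderZ (φ a) z‖ ≤ c * ‖a‖) ∧
    ∀ z a : ℂ, detW (fderiv ℝ (fun b => pderZ (φ b) z) a) ≠ 0

private lemma holder_contOn {f : ℂ → ℂ} {S : Set ℂ} {M γ : ℝ} (hγ : 0 < γ) (hM : 0 ≤ M)
    (hh : ∀ x ∈ S, ∀ y ∈ S, ‖f x - f y‖ ≤ M * ‖x - y‖ ^ γ) : ContinuousOn f S := by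
  intro x hx
  rw [Metric.continuousWithinAt_iff]
  intro ε hε
  refine ⟨(ε / (M + 1)) ^ γ⁻¹, Real.rpow_pos_of_pos (by positivity) _, fun y hy hdy => ?_⟩
  have h2 : ‖y - x‖ ^ γ ≤ ε / (M + 1) := by
    have h1 : ‖y - x‖ ^ γ ≤ ((ε / (M + 1)) ^ γ⁻¹) ^ γ := by
      apply Real.rpow_le_rpow (norm_nonneg _) _ hγ.le
      rw [dist_eq_norm] at hdy
      exact hdy.le
    rwa [Real.rpow_inv_rpow (by positivity) hγ.ne'] at h1
  have h3 : dist (f y) (f x) ≤ M * (ε / (M + 1)) := by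
    rw [dist_eq_norm]
    refine (hh y hy x hx).trans ?_
    have := Real.rpow_nonneg (norm_nonneg (y - x)) γ
    nlinarith
  refine lt_of_le_of_lt h3 ?_
  rw [← mul_div_assoc, div_lt_iff₀ (by positivity)]
  nlinarith

private lemma vol_ball_toReal (z : ℂ) {ρ : ℝ} (hρ : 0 ≤ ρ) :
    (volume (ball z ρ)).toReal = ρ ^ 2 * Real.pi := by
  rw [Complex.volume_ball, ENNReal.toReal_mul, ENNReal.toReal_pow,
    ENNReal.toReal_ofReal hρ, ENNReal.coe_toReal, NNReal.coe_real_pi]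

private lemma pt_bound {z₀ : ℂ} {r p γ A : ℝ} {f : ℂ → ℂ} (hr : 0 < r) (hp : 0 < p)
    (hγ : 0 < γ) (hA : 0 ≤ A)
    (hAh : ∀ x ∈ ball z₀ (2*r), ∀ y ∈ ball z₀ (2*r), ‖f x - f y‖ ≤ A * ‖x - y‖ ^ γ)
    (hint : IntegrableOn (fun z => ‖f z‖ ^ p) (ball z₀ (2*r)) volume)
    {z : ℂ} (hz : z ∈ ball z₀ r) {ρ : ℝ} (hρ0 : 0 < ρ) (hρr : ρ ≤ r) :
    ‖f z‖ ≤ (∫ w in ball z₀ (2*r), ‖f w‖ ^ p) ^ (1/p) / (Real.pi * ρ^2) ^ (1/p) + A * ρ ^ γ := by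
  set I := ∫ w in ball z₀ (2*r), ‖f w‖ ^ p with hI
  have hI0 : 0 ≤ I :=
    setIntegral_nonneg measurableSet_ball fun w _ => Real.rpow_nonneg (norm_nonneg _) _
  by_cases hc : ‖f z‖ ≤ A * ρ ^ γ
  · exact hc.trans (le_add_of_nonneg_left (by positivity))
  push_neg at hc
  set t := ‖f z‖ - A * ρ ^ γ with htdef
  have ht : 0 < t := by simp only [htdef, sub_pos]; exact hc
  have hz2 : z ∈ ball z₀ (2*r) := by rw [mem_ball] at *; linarith
  have hsub : ball z ρ ⊆ ball z₀ (2*r) := by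
    intro w hw
    rw [mem_ball] at *
    have := dist_triangle w z z₀
    linarith
  have hlow : ∀ w ∈ ball z ρ, t ^ p ≤ ‖f w‖ ^ p := by
    intro w hw
    have hw2 : w ∈ ball z₀ (2*r) := hsub hw
    have h1 : ‖f z - f w‖ ≤ A * ρ ^ γ := by
      refine (hAh z hz2 w hw2).trans ?_
      have h2 : ‖z - w‖ ^ γ ≤ ρ ^ γ := by
        apply Real.rpow_le_rpow (norm_nonneg _) _ hγ.le
        rw [← dist_eq_norm, dist_comm]
        exact (mem_ball.mp hw).le
      nlinarith [Real.rpow_nonneg (norm_nonneg (z - w)) γ]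
    have h2 : t ≤ ‖f w‖ := by
      have h3 := norm_sub_norm_le (f z) (f w)
      simp only [htdef]
      linarith
    exact Real.rpow_le_rpow ht.le h2 hp.le
  have key : t ^ p * (ρ ^ 2 * Real.pi) ≤ I := by
    have e1 : ∫ _ in ball z ρ, t ^ p ∂volume = t ^ p * (ρ ^ 2 * Real.pi) := by
      rw [setIntegral_const, measureReal_def, vol_ball_toReal z hρ0.le, smul_eq_mul, mul_comm]
    have e2 : (∫ _ in ball z ρ, t ^ p ∂volume) ≤ ∫ w in ball z ρ, ‖f w‖ ^ p :=
      setIntegral_mono_on (integrableOn_const measure_ball_lt_top.ne)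
        (hint.mono_set hsub) measurableSet_ball hlow
    have e3 : (∫ w in ball z ρ, ‖f w‖ ^ p) ≤ I :=
      setIntegral_mono_set hint
        (Filter.Eventually.of_forall fun w => Real.rpow_nonneg (norm_nonneg _) _)
        (HasSubset.Subset.eventuallyLE hsub)
    rw [e1] at e2
    linarith
  have hπρ : (0:ℝ) < Real.pi * ρ ^ 2 := by positivity
  have h4 : t ^ p ≤ I / (Real.pi * ρ ^ 2) := by
    rw [le_div_iff₀ hπρ]
    nlinarith [key]
  have h5 : t ≤ I ^ (1/p) / (Real.pi * ρ ^ 2) ^ (1/p) := by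
    have h6 := Real.rpow_le_rpow (by positivity) h4 (by positivity : (0:ℝ) ≤ 1/p)
    rwa [one_div, Real.rpow_rpow_inv ht.le hp.ne', ← one_div,
      Real.div_rpow hI0 hπρ.le] at h6
  simp only [htdef] at h5
  linarith

set_option maxHeartbeats 1000000 in
/-- interpolation between `L^p` and `C^γ` norms on concentric disks:
`‖f‖_{L^∞(𝔻_r)} ≤ ‖f‖_{C^s(𝔻_r)} ≤ c(θ, 𝔻_{2r}) ‖f‖_{L^p(𝔻_{2r})}^{1−θ} ‖f‖_{C^γ(𝔻_{2r})}^θ`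
for `s = θ(γ + 2/p) − 2/p` and `θ ∈ (2/(2+γp), 1]`. -/
theorem statement6 (z₀ : ℂ) (r : ℝ) (hr : 0 < r) (θ : ℝ) :
    ∃ c : ℝ, 0 < c ∧
      ∀ (p γ s : ℝ) (f : ℂ → ℂ), 1 < p → 0 < γ → γ < 1 →
        2 / (2 + γ * p) < θ → θ ≤ 1 → s = θ * (γ + 2 / p) - 2 / p →
        (∃ M : ℝ, (∀ z ∈ ball z₀ (2 * r), ‖f z‖ ≤ M) ∧
          ∀ x ∈ ball z₀ (2 * r), ∀ y ∈ ball z₀ (2 * r), ‖f x - f y‖ ≤ M * ‖x - y‖ ^ γ) →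
        supNormOn f (ball z₀ r) ≤ holderNormOn s f (ball z₀ r) ∧
          holderNormOn s f (ball z₀ r) ≤
            c * lpNormOn p f (ball z₀ (2 * r)) ^ (1 - θ) *
              holderNormOn γ f (ball z₀ (2 * r)) ^ θ := by
  set c₀ : ℝ := max 1 r⁻¹ with hc₀def
  set c₁ : ℝ := max 1 r with hc₁def
  set K : ℝ := max 1 ((2*r)^2 * Real.pi) with hKdef
  have hc₀1 : (1:ℝ) ≤ c₀ := le_max_left _ _
  have hc₁1 : (1:ℝ) ≤ c₁ := le_max_left _ _
  have hK1 : (1:ℝ) ≤ K := le_max_left _ _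
  have hc₀3 : (1:ℝ) ≤ c₀^3 := one_le_pow₀ hc₀1
  have hc₁3 : (1:ℝ) ≤ c₁^3 := one_le_pow₀ hc₁1
  set C : ℝ := c₀^3 * K + c₁^3 with hCdef
  have hC1 : (1:ℝ) ≤ C := by
    have h1 : (1:ℝ)*1 ≤ c₀^3*K := mul_le_mul hc₀3 hK1 zero_le_one (by linarith)
    rw [hCdef]; linarith
  have hC0 : (0:ℝ) < C := by linarith
  refine ⟨3 * C, by linarith, ?_⟩
  intro p γ s f hp hγ0 hγ1 hθl hθu hs hMex
  obtain ⟨M, hMb, hMh⟩ := hMex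
  set B1 := ball z₀ r with hB1def
  set B2 := ball z₀ (2*r) with hB2def
  have hp0 : (0:ℝ) < p := by linarith
  have h2r : (0:ℝ) < 2*r := by linarith
  have hzb : z₀ ∈ B2 := mem_ball_self h2r
  have hB12 : B1 ⊆ B2 := ball_subset_ball (by linarith)
  have hM0 : 0 ≤ M := (norm_nonneg _).trans (hMb z₀ hzb)
  have h2gp : (0:ℝ) < 2 + γ*p := by have := mul_pos hγ0 hp0; linarith
  have hθ0 : 0 < θ := lt_trans (div_pos two_pos h2gp) hθl
  have hp2 : (0:ℝ) < 2/p := by positivity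
  have hgp2 : (0:ℝ) < γ + 2/p := by positivity
  have keyθ : 2/p < θ * (γ + 2/p) := by
    have hid : (2/(2+γ*p)) * (γ + 2/p) = 2/p := by field_simp; ring
    calc 2/p = (2/(2+γ*p)) * (γ + 2/p) := hid.symm
      _ < θ * (γ + 2/p) := by exact mul_lt_mul_of_pos_right hθl hgp2
  have hs0 : 0 < s := by rw [hs]; linarith
  have hsγ : s ≤ γ := by
    rw [hs]
    linarith [mul_nonneg (sub_nonneg.2 hθu) hγ0.le, mul_nonneg (sub_nonneg.2 hθu) hp2.le]
  have hsβ : s + 2/p = θ * (γ + 2/p) := by rw [hs]; ring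
  -- general nonnegativity facts
  have hsemi_nonneg : ∀ (s' : ℝ) (S : Set ℂ), 0 ≤ holderSeminormOn s' f S := by
    intro s' S
    apply Real.sSup_nonneg
    rintro x ⟨a, _, b, _, hab, rfl⟩
    positivity
  have hsup_nonneg : ∀ S : Set ℂ, 0 ≤ supNormOn f S := by
    intro S
    apply Real.sSup_nonneg
    rintro x ⟨a, _, rfl⟩
    exact norm_nonneg _
  refine ⟨le_add_of_nonneg_right (hsemi_nonneg s B1), ?_⟩
  -- main quantities
  set A : ℝ := holderNormOn γ f B2 with hAdef
  set N : ℝ := lpNormOn p f B2 with hNdef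
  set I : ℝ := ∫ z in B2, ‖f z‖ ^ p with hIdef
  have hIN : N = I ^ (1/p) := rfl
  have hI0 : 0 ≤ I :=
    setIntegral_nonneg measurableSet_ball fun w _ => Real.rpow_nonneg (norm_nonneg _) _
  have hN0 : 0 ≤ N := Real.rpow_nonneg hI0 _
  have hbdd : BddAbove ((fun z => ‖f z‖) '' B2) := by
    refine ⟨M, ?_⟩
    rintro x ⟨z, hz, rfl⟩
    exact hMb z hz
  have hfA : ∀ z ∈ B2, ‖f z‖ ≤ A := by
    intro z hz
    refine le_trans (le_csSup hbdd ⟨z, hz, rfl⟩) ?_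
    exact le_add_of_nonneg_right (hsemi_nonneg γ B2)
  have hA0 : 0 ≤ A := (norm_nonneg (f z₀)).trans (hfA z₀ hzb)
  have hAh : ∀ x ∈ B2, ∀ y ∈ B2, ‖f x - f y‖ ≤ A * ‖x - y‖ ^ γ := by
    intro x hx y hy
    by_cases hxy : x = y
    · subst hxy
      simp only [sub_self, norm_zero]
      positivity
    · have hd0 : (0:ℝ) < ‖x - y‖ := by
        rw [norm_pos_iff, sub_ne_zero]; exact hxy
      have hdγ : (0:ℝ) < ‖x - y‖ ^ γ := Real.rpow_pos_of_pos hd0 γ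
      have hbdd2 : BddAbove {c : ℝ | ∃ x ∈ B2, ∃ y ∈ B2, x ≠ y ∧ c = ‖f x - f y‖ / ‖x - y‖ ^ γ} := by
        refine ⟨M, ?_⟩
        rintro q ⟨a, ha, b, hb, hab, rfl⟩
        have hab0 : (0:ℝ) < ‖a - b‖ := by rw [norm_pos_iff, sub_ne_zero]; exact hab
        rw [div_le_iff₀ (Real.rpow_pos_of_pos hab0 γ)]
        calc ‖f a - f b‖ ≤ M * ‖a - b‖ ^ γ := hMh a ha b hb
          _ ≤ M * ‖a - b‖ ^ γ := le_rfl
      have hmem : ‖f x - f y‖ / ‖x - y‖ ^ γ ≤ holderSeminormOn γ f B2 :=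
        le_csSup hbdd2 ⟨x, hx, y, hy, hxy, rfl⟩
      have hsemiA : holderSeminormOn γ f B2 ≤ A :=
        le_add_of_nonneg_left (hsup_nonneg B2)
      rw [← div_le_iff₀ hdγ] at *
      exact hmem.trans hsemiA
  have hint : IntegrableOn (fun z => ‖f z‖ ^ p) B2 volume := by
    have hcont : ContinuousOn f B2 := holder_contOn hγ0 hM0 hMh
    have hcont2 : ContinuousOn (fun z => ‖f z‖ ^ p) B2 :=
      hcont.norm.rpow_const fun x _ => Or.inr hp0.le
    refine ⟨hcont2.aestronglyMeasurable measurableSet_ball, ?_⟩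
    apply HasFiniteIntegral.restrict_of_bounded (C := M ^ p) measure_ball_lt_top
    rw [ae_restrict_iff' measurableSet_ball]
    refine Filter.Eventually.of_forall fun z hz => ?_
    rw [Real.norm_of_nonneg (Real.rpow_nonneg (norm_nonneg _) _)]
    exact Real.rpow_le_rpow (norm_nonneg _) (hMb z hz) hp0.le
  -- RHS nonnegativity
  have hRHS0 : 0 ≤ 3 * C * N ^ (1-θ) * A ^ θ := by
    have := Real.rpow_nonneg hN0 (1-θ)
    have := Real.rpow_nonneg hA0 θ
    positivity
  -- helper to conclude when f vanishes on B1
  have hconc0 : (∀ z ∈ B1, ‖f z‖ = 0) → holderNormOn s f B1 ≤ 3 * C * N ^ (1-θ) * A ^ θ := by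
    intro hz0
    have h1 : supNormOn f B1 ≤ 0 := by
      apply Real.sSup_nonpos
      rintro x ⟨z, hz, rfl⟩
      exact (hz0 z hz).le
    have h2 : holderSeminormOn s f B1 ≤ 0 := by
      apply Real.sSup_nonpos
      rintro q ⟨a, ha, b, hb, hab, rfl⟩
      have : f a - f b = 0 := by
        have ha0 := norm_eq_zero.mp (hz0 a ha)
        have hb0 := norm_eq_zero.mp (hz0 b hb)
        rw [ha0, hb0, sub_zero]
      rw [this, norm_zero, zero_div]
    calc holderNormOn s f B1 = supNormOn f B1 + holderSeminormOn s f B1 := rfl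
      _ ≤ 0 := by linarith
      _ ≤ _ := hRHS0
  by_cases hApos : A ≤ 0
  · -- A = 0 : f vanishes on B2
    apply hconc0
    intro z hz
    exact le_antisymm ((hfA z (hB12 hz)).trans hApos) (norm_nonneg _)
  push_neg at hApos
  by_cases hNpos : N ≤ 0
  · -- N = 0 : f vanishes on B1
    have hNz : N = 0 := le_antisymm hNpos hN0
    apply hconc0
    intro z hz
    refine le_antisymm ?_ (norm_nonneg _)
    by_contra hcon
    push_neg at hcon
    set ρ : ℝ := min r ((‖f z‖ / (2*A)) ^ γ⁻¹) with hρdef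
    have h2A : (0:ℝ) < 2*A := by linarith
    have hx0 : (0:ℝ) < (‖f z‖ / (2*A)) ^ γ⁻¹ :=
      Real.rpow_pos_of_pos (div_pos hcon h2A) _
    have hρ0 : 0 < ρ := lt_min hr hx0
    have hρr : ρ ≤ r := min_le_left _ _
    have hb := pt_bound hr hp0 hγ0 hA0 hAh hint hz hρ0 hρr
    rw [← hIdef, ← hIN, hNz, zero_div] at hb
    have hργ : ρ ^ γ ≤ ‖f z‖ / (2*A) := by
      have h1 : ρ ^ γ ≤ ((‖f z‖ / (2*A)) ^ γ⁻¹) ^ γ :=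
        Real.rpow_le_rpow hρ0.le (min_le_right _ _) hγ0.le
      rwa [Real.rpow_inv_rpow (div_pos hcon h2A).le hγ0.ne'] at h1
    have hfin : A * ρ ^ γ ≤ ‖f z‖ / 2 := by
      have h2 : A * ρ ^ γ ≤ A * (‖f z‖ / (2*A)) := mul_le_mul_of_nonneg_left hργ hA0
      have h3 : A * (‖f z‖ / (2*A)) = ‖f z‖ / 2 := by
        rw [← mul_div_assoc, mul_comm 2 A, mul_div_mul_left _ _ (ne_of_gt hApos)]
      linarith
    linarith
  push_neg at hNpos
  -- main case
  set u : ℝ := N / (K * A) with hudef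
  have hKA : (0:ℝ) < K * A := mul_pos (by linarith) hApos
  have hu0 : 0 < u := div_pos hNpos hKA
  have hNK : N ≤ K * A := by
    have hIb : I ≤ (2*r)^2 * Real.pi * A ^ p := by
      have h1 : I ≤ ∫ _ in B2, A ^ p ∂volume := by
        apply setIntegral_mono_on hint (integrableOn_const measure_ball_lt_top.ne)
          measurableSet_ball
        intro z hz
        exact Real.rpow_le_rpow (norm_nonneg _) (hfA z hz) hp0.le
      rwa [setIntegral_const, measureReal_def, vol_ball_toReal z₀ h2r.le, smul_eq_mul] at h1
    have h2 : N ≤ ((2*r)^2 * Real.pi * A ^ p) ^ (1/p) := by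
      rw [hIN]
      exact Real.rpow_le_rpow hI0 hIb (by positivity)
    have h3 : ((2*r)^2 * Real.pi * A ^ p) ^ (1/p) = ((2*r)^2 * Real.pi) ^ (1/p) * A := by
      rw [Real.mul_rpow (by positivity) (Real.rpow_nonneg hA0 _), one_div,
        Real.rpow_rpow_inv hA0 hp0.ne']
    have h4 : ((2*r)^2 * Real.pi) ^ (1/p) ≤ K := by
      calc ((2*r)^2 * Real.pi) ^ (1/p) ≤ K ^ (1/p) :=
            Real.rpow_le_rpow (by positivity) (le_max_right _ _) (by positivity)
        _ ≤ K ^ (1:ℝ) := Real.rpow_le_rpow_of_exponent_le hK1 (by rw [div_le_one hp0]; linarith)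
        _ = K := Real.rpow_one K
    calc N ≤ ((2*r)^2 * Real.pi) ^ (1/p) * A := h3 ▸ h2
      _ ≤ K * A := mul_le_mul_of_nonneg_right h4 hA0
  have hu1 : u ≤ 1 := (div_le_one hKA).2 hNK
  have hNu : N = u * (K * A) := (div_mul_cancel₀ N hKA.ne').symm
  set e : ℝ := p / (γ*p + 2) with hedef
  have hgp20 : (0:ℝ) < γ*p + 2 := by have := mul_pos hγ0 hp0; linarith
  have he0 : 0 < e := div_pos hp0 hgp20
  have he1 : e * (γ + 2/p) = 1 := by
    rw [hedef]; field_simp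
  set ρ : ℝ := r * u ^ e with hρdef
  have hue1 : u ^ e ≤ 1 := Real.rpow_le_one hu0.le hu1 he0.le
  have hρ0 : 0 < ρ := by
    have := Real.rpow_pos_of_pos hu0 e
    positivity
  have hρr : ρ ≤ r := mul_le_of_le_one_right hr.le hue1
  set X : ℝ := N ^ (1-θ) * A ^ θ with hXdef
  have hX0 : 0 ≤ X := mul_nonneg (Real.rpow_nonneg hN0 _) (Real.rpow_nonneg hA0 _)
  -- A * u^(1-θ) ≤ X
  have fact_u : A * u ^ (1-θ) ≤ X := by
    have h1 : u ^ (1-θ) = N ^ (1-θ) / (K*A) ^ (1-θ) := Real.div_rpow hNpos.le hKA.le _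
    have h2 : A ^ (1-θ) ≤ (K*A) ^ (1-θ) :=
      Real.rpow_le_rpow hA0 (le_mul_of_one_le_left hA0 hK1) (by linarith)
    have h3 : u ^ (1-θ) ≤ N ^ (1-θ) / A ^ (1-θ) := by
      rw [h1]
      gcongr
    have hAne : A ^ (1-θ) ≠ 0 := ne_of_gt (Real.rpow_pos_of_pos hApos _)
    have hAA : A ^ θ * A ^ (1-θ) = A := by
      rw [← Real.rpow_add hApos]; norm_num
    have hAdiv : A / A ^ (1-θ) = A ^ θ := by
      rw [eq_comm, eq_div_iff hAne]; exact hAA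
    have h4 : A * (N ^ (1-θ) / A ^ (1-θ)) = X := by
      rw [hXdef]
      calc A * (N ^ (1-θ) / A ^ (1-θ)) = N ^ (1-θ) * (A / A ^ (1-θ)) := by ring
        _ = N ^ (1-θ) * A ^ θ := by rw [hAdiv]
    calc A * u ^ (1-θ) ≤ A * (N ^ (1-θ) / A ^ (1-θ)) := by
          exact mul_le_mul_of_nonneg_left h3 hA0
      _ = X := h4
  -- core fact 1
  have fact1 : ∀ v : ℝ, 0 ≤ v → 2/p + v ≤ θ * (γ + 2/p) →
      N / ((Real.pi * ρ^2) ^ (1/p) * ρ ^ v) ≤ c₀^3 * K * X := by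
    intro v hv0 hvβ
    obtain ⟨β, hβdef⟩ : ∃ β : ℝ, β = 2/p + v := ⟨_, rfl⟩
    rw [← hβdef] at hvβ
    have hβ0 : 0 < β := by rw [hβdef]; positivity
    have hβ3 : β ≤ 3 := by
      have : θ * (γ + 2/p) ≤ γ + 2/p := by
        linarith [mul_nonneg (sub_nonneg.2 hθu) hgp2.le]
      have h2p : 2/p ≤ 2 := by
        rw [div_le_iff₀ hp0]; linarith
      linarith only [hvβ, this, h2p, hγ1]
    have hρβ : (0:ℝ) < ρ ^ β := Real.rpow_pos_of_pos hρ0 _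
    have hden : ρ ^ β ≤ (Real.pi * ρ^2) ^ (1/p) * ρ ^ v := by
      have hπ1 : (1:ℝ) ≤ Real.pi ^ (1/p) :=
        Real.one_le_rpow (by linarith [Real.pi_gt_three]) (by positivity)
      have h1 : (Real.pi * ρ^2) ^ (1/p) = Real.pi ^ (1/p) * ρ ^ (2/p) := by
        rw [Real.mul_rpow Real.pi_pos.le (by positivity), ← Real.rpow_natCast ρ 2,
          ← Real.rpow_mul hρ0.le]
        congr 1
        push_cast
        ring
      calc ρ ^ β = ρ ^ (2/p) * ρ ^ v := by rw [hβdef, Real.rpow_add hρ0]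
        _ ≤ (Real.pi ^ (1/p) * ρ ^ (2/p)) * ρ ^ v :=
            mul_le_mul_of_nonneg_right
              (le_mul_of_one_le_left (Real.rpow_pos_of_pos hρ0 (2/p)).le hπ1)
              (Real.rpow_pos_of_pos hρ0 v).le
        _ = (Real.pi * ρ^2) ^ (1/p) * ρ ^ v := by rw [h1]
    have step1 : N / ((Real.pi * ρ^2) ^ (1/p) * ρ ^ v) ≤ N / ρ ^ β := by
      gcongr
    refine step1.trans ?_
    -- N / ρ^β ≤ c₀^3 K X
    have heβ : e * β ≤ θ := by
      calc e * β ≤ e * (θ * (γ + 2/p)) := mul_le_mul_of_nonneg_left hvβ he0.le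
        _ = θ * (e * (γ + 2/p)) := by ring
        _ = θ := by rw [he1, mul_one]
    have hρβeq : ρ ^ β = r ^ β * u ^ (e*β) := by
      rw [hρdef, Real.mul_rpow hr.le (Real.rpow_pos_of_pos hu0 e).le, ← Real.rpow_mul hu0.le]
    have hrβ : (r ^ β)⁻¹ ≤ c₀^3 := by
      have h1 : (r ^ β)⁻¹ = (r⁻¹) ^ β := by rw [← Real.inv_rpow hr.le]
      have h2 : (r⁻¹) ^ β ≤ c₀ ^ β :=
        Real.rpow_le_rpow (by positivity) (le_max_right _ _) hβ0.le
      have h3 : c₀ ^ β ≤ c₀ ^ (3:ℝ) := Real.rpow_le_rpow_of_exponent_le hc₀1 hβ3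
      have h4 : c₀ ^ (3:ℝ) = c₀ ^ 3 := by
        rw [← Real.rpow_natCast c₀ 3]; norm_num
      rw [h1]
      exact h2.trans (h3.trans_eq h4)
    have huβ : u ^ (1 - e*β) ≤ u ^ (1-θ) :=
      Real.rpow_le_rpow_of_exponent_ge hu0 hu1 (by linarith)
    have hkey : N / ρ ^ β = K * (A * u ^ (1 - e*β)) * (r ^ β)⁻¹ := by
      rw [hNu, hρβeq, Real.rpow_sub hu0, Real.rpow_one]
      field_simp
    rw [hkey]
    have h5 : A * u ^ (1 - e*β) ≤ X := by
      calc A * u ^ (1 - e*β) ≤ A * u ^ (1-θ) := by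
            exact mul_le_mul_of_nonneg_left huβ hA0
        _ ≤ X := fact_u
    have hrβ0 : (0:ℝ) ≤ (r ^ β)⁻¹ := by positivity
    have hK0 : (0:ℝ) ≤ K := by linarith
    calc K * (A * u ^ (1 - e*β)) * (r ^ β)⁻¹
        ≤ K * X * (r ^ β)⁻¹ :=
          mul_le_mul_of_nonneg_right (mul_le_mul_of_nonneg_left h5 hK0) hrβ0
      _ ≤ K * X * c₀^3 := mul_le_mul_of_nonneg_left hrβ (mul_nonneg hK0 hX0)
      _ = c₀^3 * K * X := by ring
  -- core fact 2
  have fact2 : ∀ w : ℝ, 0 ≤ w → w ≤ 3 → 1-θ ≤ e*w → A * ρ ^ w ≤ c₁^3 * X := by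
    intro w hw0 hw3 hew
    have hρweq : ρ ^ w = r ^ w * u ^ (e*w) := by
      rw [hρdef, Real.mul_rpow hr.le (Real.rpow_pos_of_pos hu0 e).le, ← Real.rpow_mul hu0.le]
    have h1 : u ^ (e*w) ≤ u ^ (1-θ) := Real.rpow_le_rpow_of_exponent_ge hu0 hu1 hew
    have h2 : r ^ w ≤ c₁^3 := by
      have h3 : r ^ w ≤ c₁ ^ w := Real.rpow_le_rpow hr.le (le_max_right _ _) hw0
      have h4 : c₁ ^ w ≤ c₁ ^ (3:ℝ) := Real.rpow_le_rpow_of_exponent_le hc₁1 hw3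
      have h5 : c₁ ^ (3:ℝ) = c₁ ^ 3 := by rw [← Real.rpow_natCast c₁ 3]; norm_num
      exact h3.trans (h4.trans_eq h5)
    calc A * ρ ^ w = (A * u ^ (e*w)) * r ^ w := by rw [hρweq]; ring
      _ ≤ (A * u ^ (1-θ)) * c₁^3 :=
          mul_le_mul (mul_le_mul_of_nonneg_left h1 hA0) h2
            (Real.rpow_pos_of_pos hr w).le
            (mul_nonneg hA0 (Real.rpow_nonneg hu0.le (1-θ)))
      _ ≤ X * c₁^3 := mul_le_mul_of_nonneg_right fact_u (by positivity)
      _ = c₁^3 * X := mul_comm _ _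
  -- exponent facts for fact2 applications
  have he2 : e * (2/p) = 2/(γ*p+2) := by
    rw [hedef, div_mul_div_comm, mul_comm (γ*p+2) p,
      mul_div_mul_left 2 (γ*p+2) hp0.ne']
  have h7 : e * γ + e * (2/p) = 1 := by rw [← he1]; ring
  have h2eq : 2/(2+γ*p) = 2/(γ*p+2) := by ring_nf
  have heγ : 1-θ ≤ e * γ := by
    rw [h2eq] at hθl
    linarith only [h7, he2, hθl]
  have hgs : γ - s = (1-θ)*(γ+2/p) := by rw [hs]; ring
  have heγs : e * (γ - s) = 1-θ := by
    calc e * (γ - s) = (1-θ) * (e * (γ + 2/p)) := by rw [hgs]; ring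
      _ = 1-θ := by rw [he1, mul_one]
  -- sup bound
  have supB : ∀ z ∈ B1, ‖f z‖ ≤ C * X := by
    intro z hz
    have hb := pt_bound hr hp0 hγ0 hA0 hAh hint hz hρ0 hρr
    rw [← hIdef, ← hIN] at hb
    have h1 : N / (Real.pi * ρ^2) ^ (1/p) ≤ c₀^3 * K * X := by
      have := fact1 0 le_rfl (by linarith)
      rwa [Real.rpow_zero, mul_one] at this
    have h2 : A * ρ ^ γ ≤ c₁^3 * X := fact2 γ hγ0.le (by linarith) heγ
    calc ‖f z‖ ≤ N / (Real.pi * ρ^2) ^ (1/p) + A * ρ ^ γ := hb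
      _ ≤ c₀^3 * K * X + c₁^3 * X := by linarith
      _ = C * X := by rw [hCdef]; ring
  -- quotient bound
  have qB : ∀ x ∈ B1, ∀ y ∈ B1, x ≠ y → ‖f x - f y‖ / ‖x - y‖ ^ s ≤ 2 * C * X := by
    intro x hx y hy hxy
    set d : ℝ := ‖x - y‖ with hddef
    have hd0 : 0 < d := by rw [hddef, norm_pos_iff, sub_ne_zero]; exact hxy
    have hds : 0 < d ^ s := Real.rpow_pos_of_pos hd0 s
    have hγs0 : 0 ≤ γ - s := by linarith
    have hfact2gs : A * ρ ^ (γ - s) ≤ c₁^3 * X :=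
      fact2 (γ - s) hγs0 (by linarith) (le_of_eq heγs.symm)
    by_cases hdρ : d ≤ ρ
    · rw [div_le_iff₀ hds]
      have h1 : ‖f x - f y‖ ≤ A * d ^ γ := hAh x (hB12 hx) y (hB12 hy)
      have h2 : A * d ^ γ = (A * d ^ (γ - s)) * d ^ s := by
        rw [mul_assoc, ← Real.rpow_add hd0]
        congr 1
        congr 1
        ring
      have h3 : d ^ (γ - s) ≤ ρ ^ (γ - s) := Real.rpow_le_rpow hd0.le hdρ hγs0
      have h4 : A * d ^ (γ - s) ≤ c₁^3 * X := by
        calc A * d ^ (γ - s) ≤ A * ρ ^ (γ - s) := mul_le_mul_of_nonneg_left h3 hA0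
          _ ≤ c₁^3 * X := hfact2gs
      have h5 : c₁^3 * X ≤ 2 * C * X := by
        have h6 : c₁^3 ≤ 2 * C := by
          have h7 : (0:ℝ) ≤ c₀^3*K := mul_nonneg (by linarith) (by linarith)
          rw [hCdef]; linarith
        exact mul_le_mul_of_nonneg_right h6 hX0
      calc ‖f x - f y‖ ≤ (A * d ^ (γ - s)) * d ^ s := h2 ▸ h1
        _ ≤ (2 * C * X) * d ^ s :=
            mul_le_mul_of_nonneg_right (h4.trans h5) hds.le
    · push_neg at hdρ
      have hbx := pt_bound hr hp0 hγ0 hA0 hAh hint hx hρ0 hρr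
      have hby := pt_bound hr hp0 hγ0 hA0 hAh hint hy hρ0 hρr
      rw [← hIdef, ← hIN] at hbx hby
      set T1 : ℝ := N / (Real.pi * ρ^2) ^ (1/p) with hT1def
      set T2 : ℝ := A * ρ ^ γ with hT2def
      have hT10 : 0 ≤ T1 := by positivity
      have hT20 : 0 ≤ T2 := by positivity
      have h1 : ‖f x - f y‖ ≤ 2 * (T1 + T2) := by
        have := norm_sub_le (f x) (f y)
        have h2 : ‖f x - y‖ = ‖f x - y‖ := rfl
        linarith [hbx, hby, norm_sub_le (f x) (f y)]
      have hρs : 0 < ρ ^ s := Real.rpow_pos_of_pos hρ0 s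
      have hρds : ρ ^ s ≤ d ^ s := Real.rpow_le_rpow hρ0.le hdρ.le hs0.le
      have h3 : ‖f x - f y‖ / d ^ s ≤ 2 * (T1 + T2) / ρ ^ s := by
        calc ‖f x - f y‖ / d ^ s ≤ (2 * (T1 + T2)) / d ^ s := by gcongr
          _ ≤ (2 * (T1 + T2)) / ρ ^ s := by gcongr
      have h4 : T1 / ρ ^ s ≤ c₀^3 * K * X := by
        rw [hT1def, div_div]
        exact fact1 s hs0.le (by linarith only [hsβ])
      have h5 : T2 / ρ ^ s ≤ c₁^3 * X := by
        have : T2 / ρ ^ s = A * ρ ^ (γ - s) := by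
          rw [hT2def, Real.rpow_sub hρ0, mul_div_assoc]
        rw [this]
        exact hfact2gs
      calc ‖f x - f y‖ / d ^ s ≤ 2 * (T1 + T2) / ρ ^ s := h3
        _ = 2 * (T1 / ρ ^ s + T2 / ρ ^ s) := by ring
        _ ≤ 2 * (c₀^3 * K * X + c₁^3 * X) := by linarith
        _ = 2 * C * X := by rw [hCdef]; ring
  -- conclude
  have hsup : supNormOn f B1 ≤ C * X := by
    apply Real.sSup_le _ (by positivity)
    rintro q ⟨z, hz, rfl⟩
    exact supB z hz
  have hsemi : holderSeminormOn s f B1 ≤ 2 * C * X := by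
    apply Real.sSup_le _ (by positivity)
    rintro q ⟨a, ha, b, hb, hab, rfl⟩
    exact qB a ha b hb hab
  calc holderNormOn s f B1 = supNormOn f B1 + holderSeminormOn s f B1 := rfl
    _ ≤ C * X + 2 * C * X := by linarith
    _ = 3 * C * N ^ (1-θ) * A ^ θ := by rw [hXdef]; ring
end
end

section
/- Let 𝓕 = {φ_a(z)}_{a∈ℂ} be a field of K-quasiconformal mappings that is smooth ((z,a) ↦ D_a D_z φ_a(z) is continuous on ℂ × ℂ) and non-degenerate. Then for every fixed z ∈ ℂ the mapping F_z : a ↦ ∂_z φ_a(z) is a homeomorphism of ℂ onto ℂ. -/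
open MeasureTheory Metric Filter Topology Asymptotics

noncomputable section

/-- Any real-linear map on `ℂ` decomposes via its Wirtinger derivatives. -/
lemma clm_wirtinger_decomp (D : ℂ →L[ℝ] ℂ) (w : ℂ) :
    D w = wirZ D * w + wirZbar D * (starRingEnd ℂ) w := by
  obtain ⟨x, y, rfl⟩ : ∃ x y : ℝ, (x : ℂ) + y * Complex.I = w :=
    ⟨w.re, w.im, Complex.re_add_im w⟩
  have hD : D ((x : ℂ) + (y : ℂ) * Complex.I) = x • D 1 + y • D Complex.I := by
    have h : ((x : ℂ) + (y : ℂ) * Complex.I) = x • (1 : ℂ) + y • Complex.I := by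
      simp [Complex.real_smul]
    rw [h]
    simp only [map_add, ContinuousLinearMap.map_smul]
  rw [hD]
  simp only [wirZ, wirZbar, Complex.real_smul, map_add, map_mul, Complex.conj_ofReal,
    Complex.conj_I]
  linear_combination ((y : ℂ) * D Complex.I) * Complex.I_sq

/-- A real-linear map on `ℂ` with nonzero Wirtinger determinant is injective. -/
lemma injective_of_detW {D : ℂ →L[ℝ] ℂ} (h : detW D ≠ 0) : Function.Injective D := by
  have key : ∀ w : ℂ, D w = 0 → w = 0 := by
    intro w hw
    by_contra hw0
    rw [clm_wirtinger_decomp] at hw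
    have h1 : wirZ D * w = -(wirZbar D * (starRingEnd ℂ) w) := by
      linear_combination hw
    have h2 : ‖wirZ D‖ * ‖w‖ = ‖wirZbar D‖ * ‖w‖ := by
      have := congrArg norm h1
      rwa [norm_neg, norm_mul, norm_mul, RCLike.norm_conj] at this
    have h3 : ‖wirZ D‖ = ‖wirZbar D‖ :=
      mul_right_cancel₀ (norm_ne_zero_iff.mpr hw0) h2
    exact h (by rw [detW, h3]; ring)
  intro a b hab
  have h0 : D (a - b) = 0 := by rw [map_sub, hab, sub_self]
  exact sub_eq_zero.mp (key _ h0)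

/-- `wirZ` as a continuous linear map. -/
def Wclm : (ℂ →L[ℝ] ℂ) →L[ℝ] ℂ :=
  LinearMap.toContinuousLinearMap
  { toFun := wirZ
    map_add' := by
      intro D E
      simp only [wirZ, ContinuousLinearMap.add_apply]
      ring
    map_smul' := by
      intro r D
      simp only [wirZ, ContinuousLinearMap.smul_apply, RingHom.id_apply, Complex.real_smul]
      ring }

lemma Wclm_apply (D : ℂ →L[ℝ] ℂ) : Wclm D = wirZ D := rfl

/-- for a smooth and non-degenerate field of `K`-quasiconformal
mappings, the map `F_z : a ↦ ∂_z φ_a(z)` is a homeomorphism of `ℂ` onto `ℂ`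
for every fixed `z`. -/
theorem statement15 (K : ℝ) (hK : 1 ≤ K) (φ : ℂ → ℂ → ℂ)
    (hφ : IsQCField K φ) (hsm : SmoothField φ) (hnd : NonDegField φ) :
    ∀ z : ℂ, IsHomeomorph fun a => pderZ (φ a) z := by
  intro z
  have F : ℂ → ℂ := fun a => pderZ (φ a) z
  -- `F` is C¹.
  have hG : ContDiff ℝ 1 (fun a => fderiv ℝ (φ a) z) := by
    rw [contDiff_one_iff_fderiv]
    refine ⟨fun a => hsm.2.1 z a, ?_⟩
    exact hsm.2.2.comp ((continuous_const : Continuous fun _ : ℂ => z).prodMk continuous_id)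
  have hF1 : ContDiff ℝ 1 (fun a => pderZ (φ a) z) := by
    have h : (fun a => pderZ (φ a) z) = fun a => Wclm (fderiv ℝ (φ a) z) := rfl
    rw [h]
    exact Wclm.contDiff.comp hG
  have hFcont : Continuous (fun a => pderZ (φ a) z) := hF1.continuous
  -- `F` is a local homeomorphism.
  have hloc : IsLocalHomeomorph (fun a => pderZ (φ a) z) := by
    intro a
    have hdet : detW (fderiv ℝ (fun b => pderZ (φ b) z) a) ≠ 0 := hnd.2 z a
    have hinj : Function.Injective (fderiv ℝ (fun b => pderZ (φ b) z) a) :=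
      injective_of_detW hdet
    have hbij : Function.Bijective
        ((fderiv ℝ (fun b => pderZ (φ b) z) a).toLinearMap) :=
      ⟨hinj, LinearMap.injective_iff_surjective.mp hinj⟩
    let E : ℂ ≃L[ℝ] ℂ :=
      LinearEquiv.toContinuousLinearEquiv (LinearEquiv.ofBijective _ hbij)
    have hE : (E : ℂ →L[ℝ] ℂ) = fderiv ℝ (fun b => pderZ (φ b) z) a := by
      ext w; rfl
    have hsd : HasStrictFDerivAt (fun b => pderZ (φ b) z) (E : ℂ →L[ℝ] ℂ) a := by
      rw [hE]
      exact (hF1.contDiffAt).hasStrictFDerivAt one_ne_zero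
    exact ⟨HasStrictFDerivAt.toOpenPartialHomeomorph _ hsd,
      hsd.mem_toOpenPartialHomeomorph_source, (hsd.toOpenPartialHomeomorph_coe).symm⟩
  have hopen : IsOpenMap (fun a => pderZ (φ a) z) := hloc.isOpenMap
  -- value at 0
  have hφ0 : φ 0 = fun _ => (0 : ℂ) := funext hφ.2.1
  have hF0 : pderZ (φ 0) z = 0 := by
    rw [hφ0]
    simp [pderZ, wirZ]
  -- the nondegeneracy bound
  obtain ⟨c, hc1, hc2⟩ := hnd.1 (‖z‖ + 1) (by positivity)
  have hzball : z ∈ ball (0 : ℂ) (‖z‖ + 1) := by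
    simp only [mem_ball, dist_zero_right]
    linarith
  have hcpos : (0 : ℝ) < c := lt_of_lt_of_le one_pos hc1
  have hlow : ∀ a : ℂ, ‖a‖ ≤ c * ‖pderZ (φ a) z‖ := by
    intro a
    rcases eq_or_ne a 0 with rfl | ha
    · rw [hF0]; simp
    · have h := (hc2 z hzball a ha).1
      rw [div_le_iff₀ hcpos] at h
      calc ‖a‖ ≤ ‖pderZ (φ a) z‖ * c := h
        _ = c * ‖pderZ (φ a) z‖ := mul_comm _ _
  -- properness
  have hcomp : ∀ ⦃S : Set ℂ⦄, IsCompact S → IsCompact ((fun a => pderZ (φ a) z) ⁻¹' S) := by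
    intro S hS
    refine isCompact_of_isClosed_isBounded (hS.isClosed.preimage hFcont) ?_
    obtain ⟨M, hM⟩ := hS.isBounded.exists_norm_le
    rw [isBounded_iff_forall_norm_le]
    refine ⟨c * M, fun a ha => ?_⟩
    have h1 : ‖pderZ (φ a) z‖ ≤ M := hM _ ha
    calc ‖a‖ ≤ c * ‖pderZ (φ a) z‖ := hlow a
      _ ≤ c * M := by nlinarith
  have hproper : IsProperMap (fun a => pderZ (φ a) z) :=
    isProperMap_iff_isCompact_preimage.mpr ⟨hFcont, hcomp⟩
  have hclosed : IsClosedMap (fun a => pderZ (φ a) z) := hproper.isClosedMap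
  -- surjectivity
  have hsurj : Function.Surjective (fun a => pderZ (φ a) z) := by
    have h1 : IsOpen (Set.range fun a => pderZ (φ a) z) := hopen.isOpen_range
    have h2 : IsClosed (Set.range fun a => pderZ (φ a) z) := by
      have := hclosed _ isClosed_univ
      rwa [Set.image_univ] at this
    have h3 : (Set.range fun a => pderZ (φ a) z).Nonempty := ⟨pderZ (φ 0) z, 0, rfl⟩
    have h4 : (Set.range fun a => pderZ (φ a) z) = Set.univ :=
      IsClopen.eq_univ ⟨h2, h1⟩ h3
    exact Set.range_eq_univ.mp h4
  -- the set of points with subsingleton fiber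
  set A : Set ℂ := {y : ℂ | ((fun a => pderZ (φ a) z) ⁻¹' {y}).Subsingleton} with hA
  have hAopen : IsOpen A := by
    rw [isOpen_iff_forall_mem_open]
    intro y₀ hy₀
    obtain ⟨x₀, hx₀⟩ := hsurj y₀
    obtain ⟨e, hxe, hfe⟩ := hloc x₀
    have hinjU : Set.InjOn (fun a => pderZ (φ a) z) e.source := by
      rw [hfe]; exact e.injOn
    refine ⟨((fun a => pderZ (φ a) z) '' e.source) ∩
      ((fun a => pderZ (φ a) z) '' e.sourceᶜ)ᶜ, ?_, ?_, ?_, ?_⟩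
    · intro y hy x₁ hx₁ x₂ hx₂
      have hU : ∀ x : ℂ, pderZ (φ x) z = y → x ∈ e.source := by
        intro x hx
        by_contra hxc
        exact hy.2 ⟨x, hxc, hx⟩
      exact hinjU (hU x₁ hx₁) (hU x₂ hx₂) (hx₁.trans hx₂.symm)
    · exact (hopen _ e.open_source).inter
        (isOpen_compl_iff.mpr (hclosed _ e.open_source.isClosed_compl))
    · exact ⟨x₀, hxe, hx₀⟩
    · rintro ⟨x, hxc, hx⟩
      have hxfib : x ∈ (fun a => pderZ (φ a) z) ⁻¹' {y₀} := hx
      have hx₀fib : x₀ ∈ (fun a => pderZ (φ a) z) ⁻¹' {y₀} := hx₀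
      have hxx0 : x = x₀ := hy₀ hxfib hx₀fib
      exact hxc (hxx0 ▸ hxe)
  have hBopen : IsOpen Aᶜ := by
    rw [isOpen_iff_forall_mem_open]
    intro y₀ hy₀
    rw [Set.mem_compl_iff, hA, Set.mem_setOf_eq, Set.not_subsingleton_iff] at hy₀
    obtain ⟨x₁, hx₁, x₂, hx₂, hne⟩ := hy₀
    have hr : (0 : ℝ) < dist x₁ x₂ / 2 := by
      have := dist_pos.mpr hne
      linarith
    refine ⟨((fun a => pderZ (φ a) z) '' ball x₁ (dist x₁ x₂ / 2)) ∩
      ((fun a => pderZ (φ a) z) '' ball x₂ (dist x₁ x₂ / 2)), ?_, ?_, ?_⟩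
    · intro y hy
      obtain ⟨⟨w₁, hw₁, hfw₁⟩, ⟨w₂, hw₂, hfw₂⟩⟩ := hy
      rw [Set.mem_compl_iff, hA, Set.mem_setOf_eq, Set.not_subsingleton_iff]
      have hwne : w₁ ≠ w₂ := by
        intro hw
        subst hw
        rw [mem_ball] at hw₁ hw₂
        have h3 := dist_triangle x₁ w₁ x₂
        have h4 : dist x₁ w₁ = dist w₁ x₁ := dist_comm _ _
        linarith
      exact ⟨w₁, hfw₁, w₂, hfw₂, hwne⟩
    · exact (hopen _ isOpen_ball).inter (hopen _ isOpen_ball)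
    · exact ⟨⟨x₁, mem_ball_self hr, hx₁⟩, ⟨x₂, mem_ball_self hr, hx₂⟩⟩
  have hAne : (0 : ℂ) ∈ A := by
    intro x₁ hx₁ x₂ hx₂
    have hzero : ∀ x : ℂ, pderZ (φ x) z = 0 → x = 0 := by
      intro x hx
      by_contra hx0
      have := hlow x
      rw [hx] at this
      simp only [norm_zero, mul_zero] at this
      exact hx0 (norm_le_zero_iff.mp this)
    rw [hzero x₁ hx₁, hzero x₂ hx₂]
  have hAuniv : A = Set.univ := by
    refine IsClopen.eq_univ ⟨?_, hAopen⟩ ⟨0, hAne⟩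
    rw [← isOpen_compl_iff]
    exact hBopen
  have hinj : Function.Injective (fun a => pderZ (φ a) z) := by
    intro a b hab
    have hamem : a ∈ (fun a => pderZ (φ a) z) ⁻¹' {pderZ (φ b) z} := hab
    have hbmem : b ∈ (fun a => pderZ (φ a) z) ⁻¹' {pderZ (φ b) z} := rfl
    have hsub : ((fun a => pderZ (φ a) z) ⁻¹' {pderZ (φ b) z}).Subsingleton := by
      have : pderZ (φ b) z ∈ A := hAuniv ▸ Set.mem_univ _
      exact this
    exact hsub hamem hbmem
  rw [isHomeomorph_iff_continuous_isClosedMap_bijective]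
  exact ⟨hFcont, hclosed, hinj, hsurj⟩
end
end
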